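/- arXiv:1103.2485 — 6 statements merged into one kernel-verified Lean document; each statement's English description precedes it below -/
import Mathlib

section
/- Let U ⊆ ℂ be open, let u, h₁, h₂ : ℂ → ℝ and ξ₁, ξ₂, σ : ℂ → ℂ be ℝ-differentiable on U, and assume the Codazzi equations hold on U: e^{2u}·(∂h₁ + h₂·σ) = ∂̄ξ₁ + ξ₂·conj(σ) and e^{2u}·(∂h₂ − h₁·σ) = ∂̄ξ₂ − ξ₁·conj(σ). Set aᵢ := (e^{−u}·ξᵢ + e^{u}·hᵢ)/√2 and bᵢ := (e^{−u}·ξᵢ − e^{u}·hᵢ)/√2 for i = 1,2, let A_p := A_p(e^{u}/√2, a₁, a₂, b₁, b₂), and let B_k be the 5×5 complex matrix whose only nonzero entries are (1,2) ↦ −i·∂̄u, (2,1) ↦ i·∂̄u, (3,4) ↦ conj(σ), (4,3) ↦ −conj(σ). Then the matrix equation ∂̄A_p + (B_k·A_p − A_p·B_k) = 0 holds identically on U if and only if ∂h₁ + h₂·σ = 0 and ∂h₂ − h₁·σ = 0 hold identically on U. (This is the analytic content of the Ruh–Vilms-type theorem: the Gauss map of a conformal immersion into S⁴ is harmonic for the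 normal metric on SO₅/T² if and only if the immersion has parallel mean curvature vector.) -/
open Complex Matrix

noncomputable section

attribute [local instance] Matrix.normedAddCommGroup Matrix.normedSpace

/-- Wirtinger derivative ∂G := (1/2)(∂ₓG − i∂ᵧG). -/
def wDz {E : Type*} [NormedAddCommGroup E] [NormedSpace ℂ E] (G : ℂ → E) (z : ℂ) : E :=
  (2⁻¹ : ℂ) • (fderiv ℝ G z 1 - Complex.I • fderiv ℝ G z Complex.I)

/-- Wirtinger derivative ∂̄G := (1/2)(∂ₓG + i∂ᵧG). -/
def wDzBar {E : Type*} [NormedAddCommGroup E] [NormedSpace ℂ E] (G : ℂ → E) (z : ℂ) : E :=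
  (2⁻¹ : ℂ) • (fderiv ℝ G z 1 + Complex.I • fderiv ℝ G z Complex.I)

/-- The 𝔭-part matrix A_p(r, a₁, a₂, b₁, b₂). -/
def Ap (r a₁ a₂ b₁ b₂ : ℂ) : Matrix (Fin 5) (Fin 5) ℂ :=
  !![0, -r, Complex.I * r, 0, 0;
     r, 0, 0, -a₁, -a₂;
     -(Complex.I * r), 0, 0, -(Complex.I * b₁), -(Complex.I * b₂);
     0, a₁, Complex.I * b₁, 0, 0;
     0, a₂, Complex.I * b₂, 0, 0]

/-- The coefficient aᵢ = (e^{-u}ξᵢ + e^{u}hᵢ)/√2. -/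
def aCoef (u : ℂ → ℝ) (ξ : ℂ → ℂ) (h : ℂ → ℝ) (z : ℂ) : ℂ :=
  ((Real.exp (-u z) : ℝ) * ξ z + (Real.exp (u z) : ℝ) * (h z : ℂ)) / (Real.sqrt 2 : ℝ)

/-- The coefficient bᵢ = (e^{-u}ξᵢ - e^{u}hᵢ)/√2. -/
def bCoef (u : ℂ → ℝ) (ξ : ℂ → ℂ) (h : ℂ → ℝ) (z : ℂ) : ℂ :=
  ((Real.exp (-u z) : ℝ) * ξ z - (Real.exp (u z) : ℝ) * (h z : ℂ)) / (Real.sqrt 2 : ℝ)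

/-- The 𝔭-part A_p of the Maurer–Cartan form of an adapted frame. -/
def APfun (u h₁ h₂ : ℂ → ℝ) (ξ₁ ξ₂ : ℂ → ℂ) (z : ℂ) : Matrix (Fin 5) (Fin 5) ℂ :=
  Ap ((Real.exp (u z) / Real.sqrt 2 : ℝ) : ℂ)
    (aCoef u ξ₁ h₁ z) (aCoef u ξ₂ h₂ z) (bCoef u ξ₁ h₁ z) (bCoef u ξ₂ h₂ z)

/-- The 𝔨-part B_k of the Maurer–Cartan form of an adapted frame. -/
def BKfun (u : ℂ → ℝ) (σ : ℂ → ℂ) (z : ℂ) : Matrix (Fin 5) (Fin 5) ℂ :=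
  !![0, 0, 0, 0, 0;
     0, 0, -(Complex.I * wDzBar (fun w => (u w : ℂ)) z), 0, 0;
     0, Complex.I * wDzBar (fun w => (u w : ℂ)) z, 0, 0, 0;
     0, 0, 0, 0, (starRingEnd ℂ) (σ z);
     0, 0, 0, -((starRingEnd ℂ) (σ z)), 0]

/-! The commutator with `B_k` preserves matrices of the shape `A_p`, so `∂̄A_p + [B_k, A_p]` is
again some `A_p(r', a₁', a₂', b₁', b₂')`. Its first entry is `∂̄r - r ∂̄u = 0` because
`r = e^u/√2`. In the other entries the `∂̄u`-terms cancel, `∂̄hᵢ = conj (∂hᵢ)` because `hᵢ` is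
real, and the Codazzi equations trade `∂̄ξᵢ` for `e^{2u} Pᵢ`, where `P₁ = ∂h₁ + h₂σ` and
`P₂ = ∂h₂ - h₁σ`. The entries become `(e^u/√2)(Pᵢ ± conj Pᵢ)`, and these all vanish iff
`P₁ = P₂ = 0`. -/

open ComplexConjugate

theorem Complex.add_conj_eq_zero_and_sub_conj_eq_zero_iff {p : ℂ} :
    p + conj p = 0 ∧ p - conj p = 0 ↔ p = 0 := by
  refine ⟨fun ⟨hadd, hsub⟩ => ?_, fun hp => by simp [hp]⟩
  linear_combination (hadd + hsub) / 2

section Wirtinger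

variable {E F : Type*} [NormedAddCommGroup E] [NormedSpace ℂ E]
  [NormedAddCommGroup F] [NormedSpace ℂ F] {f g : ℂ → E} {z : ℂ}

theorem wDzBar_add (hf : DifferentiableAt ℝ f z) (hg : DifferentiableAt ℝ g z) :
    wDzBar (fun w => f w + g w) z = wDzBar f z + wDzBar g z := by
  simp only [wDzBar, fderiv_fun_add hf hg, _root_.add_apply]
  module

theorem wDzBar_sub (hf : DifferentiableAt ℝ f z) (hg : DifferentiableAt ℝ g z) :
    wDzBar (fun w => f w - g w) z = wDzBar f z - wDzBar g z := by
  simp only [wDzBar, fderiv_fun_sub hf hg, _root_.sub_apply]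
  module

theorem wDzBar_neg : wDzBar (fun w => -f w) z = -wDzBar f z := by
  simp only [wDzBar, fderiv_fun_neg, _root_.neg_apply]
  module

theorem wDzBar_const (v : E) : wDzBar (fun _ => v) z = 0 := by
  simp [wDzBar]

theorem ContinuousLinearMap.wDzBar_comp (L : E →L[ℂ] F) (hf : DifferentiableAt ℝ f z) :
    wDzBar (fun w => L (f w)) z = L (wDzBar f z) := by
  have hL : fderiv ℝ (fun w => L (f w)) z = (L.restrictScalars ℝ).comp (fderiv ℝ f z) :=
    ((L.restrictScalars ℝ).hasFDerivAt.comp z hf.hasFDerivAt).fderiv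
  simp [wDzBar, hL]

theorem wDzBar_mul {f g : ℂ → ℂ} (hf : DifferentiableAt ℝ f z) (hg : DifferentiableAt ℝ g z) :
    wDzBar (fun w => f w * g w) z = wDzBar f z * g z + f z * wDzBar g z := by
  simp only [wDzBar, fderiv_fun_mul hf hg, _root_.add_apply,
    _root_.smul_apply, smul_eq_mul]
  ring

theorem wDzBar_const_mul (c : ℂ) {f : ℂ → ℂ} (hf : DifferentiableAt ℝ f z) :
    wDzBar (fun w => c * f w) z = c * wDzBar f z := by
  simpa [wDzBar_const] using wDzBar_mul (differentiableAt_const c) hf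

theorem wDzBar_cexp {g : ℂ → ℂ} (hg : DifferentiableAt ℝ g z) :
    wDzBar (fun w => Complex.exp (g w)) z = Complex.exp (g z) * wDzBar g z := by
  simp only [wDzBar, hg.hasFDerivAt.cexp.fderiv, _root_.smul_apply, smul_eq_mul]
  ring

theorem wDzBar_conj {g : ℂ → ℂ} (hg : DifferentiableAt ℝ g z) :
    wDzBar (fun w => conj (g w)) z = conj (wDz g z) := by
  have hc : fderiv ℝ (fun w => conj (g w)) z
      = conjCLE.toContinuousLinearMap.comp (fderiv ℝ g z) :=
    (conjCLE.hasFDerivAt.comp z hg.hasFDerivAt).fderiv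
  simp [wDz, wDzBar, hc, map_ofNat]

theorem wDzBar_ofReal_eq_conj_wDz {h : ℂ → ℝ} (hh : DifferentiableAt ℝ (fun w => (h w : ℂ)) z) :
    wDzBar (fun w => (h w : ℂ)) z = conj (wDz (fun w => (h w : ℂ)) z) := by
  simpa only [Complex.conj_ofReal] using wDzBar_conj hh

theorem wDzBar_matrix_apply {m n : Type*} [Fintype m] [Fintype n] {M : ℂ → Matrix m n ℂ}
    (hM : ∀ i j, DifferentiableAt ℝ (fun w => M w i j) z) (i : m) (j : n) :
    wDzBar M z i j = wDzBar (fun w => M w i j) z := by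
  have hMd : DifferentiableAt ℝ M z :=
    differentiableAt_pi.2 fun i => differentiableAt_pi.2 (hM i)
  exact (((ContinuousLinearMap.proj (R := ℂ) (φ := fun _ : n => ℂ) j).comp
    (ContinuousLinearMap.proj (R := ℂ) (φ := fun _ : m => n → ℂ) i)).wDzBar_comp hMd).symm

end Wirtinger

def Bk (ω s : ℂ) : Matrix (Fin 5) (Fin 5) ℂ :=
  !![0, 0, 0, 0, 0;
     0, 0, -(Complex.I * ω), 0, 0;
     0, Complex.I * ω, 0, 0, 0;
     0, 0, 0, 0, s;
     0, 0, 0, -s, 0]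

theorem BKfun_eq_Bk (u : ℂ → ℝ) (σ : ℂ → ℂ) (z : ℂ) :
    BKfun u σ z = Bk (wDzBar (fun w => (u w : ℂ)) z) (conj (σ z)) :=
  rfl

theorem Ap_add (r a₁ a₂ b₁ b₂ r' a₁' a₂' b₁' b₂' : ℂ) :
    Ap r a₁ a₂ b₁ b₂ + Ap r' a₁' a₂' b₁' b₂'
      = Ap (r + r') (a₁ + a₁') (a₂ + a₂') (b₁ + b₁') (b₂ + b₂') := by
  ext i j
  fin_cases i <;> fin_cases j <;> simp [Ap] <;> ring

theorem Bk_mul_Ap_sub_Ap_mul_Bk (ω s r a₁ a₂ b₁ b₂ : ℂ) :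
    Bk ω s * Ap r a₁ a₂ b₁ b₂ - Ap r a₁ a₂ b₁ b₂ * Bk ω s
      = Ap (-(r * ω)) (ω * b₁ + s * a₂) (ω * b₂ - s * a₁) (ω * a₁ + s * b₂)
          (ω * a₂ - s * b₁) := by
  ext i j
  fin_cases i <;> fin_cases j <;> simp [Ap, Bk] <;>
    ring_nf <;> simp [Complex.I_sq]

theorem Ap_eq_zero_iff {r a₁ a₂ b₁ b₂ : ℂ} :
    Ap r a₁ a₂ b₁ b₂ = 0 ↔ r = 0 ∧ a₁ = 0 ∧ a₂ = 0 ∧ b₁ = 0 ∧ b₂ = 0 := by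
  refine ⟨fun h => ?_, ?_⟩
  · have entry (i j : Fin 5) : Ap r a₁ a₂ b₁ b₂ i j = 0 := by rw [h]; rfl
    exact ⟨by simpa [Ap] using entry 1 0, by simpa [Ap] using entry 3 1,
      by simpa [Ap] using entry 4 1, by simpa [Ap] using entry 3 2, by simpa [Ap] using entry 4 2⟩
  · rintro ⟨rfl, rfl, rfl, rfl, rfl⟩
    ext i j
    fin_cases i <;> fin_cases j <;> simp [Ap]

theorem wDzBar_Ap {r a₁ a₂ b₁ b₂ : ℂ → ℂ} {z : ℂ}
    (hr : DifferentiableAt ℝ r z) (ha₁ : DifferentiableAt ℝ a₁ z)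
    (ha₂ : DifferentiableAt ℝ a₂ z) (hb₁ : DifferentiableAt ℝ b₁ z)
    (hb₂ : DifferentiableAt ℝ b₂ z) :
    wDzBar (fun w => Ap (r w) (a₁ w) (a₂ w) (b₁ w) (b₂ w)) z
      = Ap (wDzBar r z) (wDzBar a₁ z) (wDzBar a₂ z) (wDzBar b₁ z) (wDzBar b₂ z) := by
  have hentry (i j : Fin 5) :
      DifferentiableAt ℝ (fun w => Ap (r w) (a₁ w) (a₂ w) (b₁ w) (b₂ w) i j) z := by
    fin_cases i <;> fin_cases j <;> simp [Ap] <;> fun_prop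
  ext i j
  rw [wDzBar_matrix_apply hentry]
  fin_cases i <;> fin_cases j <;> simp [Ap, wDzBar_const, wDzBar_neg, wDzBar_const_mul, *]

section AdaptedFrame

variable {u h h₁ h₂ : ℂ → ℝ} {ξ ξ₁ ξ₂ : ℂ → ℂ} {z : ℂ}

theorem aCoef_eq (u : ℂ → ℝ) (ξ : ℂ → ℂ) (h : ℂ → ℝ) :
    aCoef u ξ h = fun w =>
      (Complex.exp (-(u w : ℂ)) * ξ w + Complex.exp (u w : ℂ) * h w) * ((√2 : ℝ) : ℂ)⁻¹ := by
  funext w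
  simp [aCoef, div_eq_mul_inv]

theorem bCoef_eq (u : ℂ → ℝ) (ξ : ℂ → ℂ) (h : ℂ → ℝ) :
    bCoef u ξ h = fun w =>
      (Complex.exp (-(u w : ℂ)) * ξ w - Complex.exp (u w : ℂ) * h w) * ((√2 : ℝ) : ℂ)⁻¹ := by
  funext w
  simp [bCoef, div_eq_mul_inv]

theorem wDzBar_aCoef_add_mul_bCoef (hu : DifferentiableAt ℝ (fun w => (u w : ℂ)) z)
    (hξ : DifferentiableAt ℝ ξ z) (hh : DifferentiableAt ℝ (fun w => (h w : ℂ)) z) :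
    wDzBar (aCoef u ξ h) z + wDzBar (fun w => (u w : ℂ)) z * bCoef u ξ h z
      = (Real.exp (-u z) * wDzBar ξ z + Real.exp (u z) * conj (wDz (fun w => (h w : ℂ)) z))
          / (√2 : ℝ) := by
  rw [aCoef_eq]
  simp (disch := fun_prop) only [wDzBar_add, wDzBar_mul, wDzBar_cexp, wDzBar_neg, wDzBar_const,
    wDzBar_ofReal_eq_conj_wDz]
  simp only [bCoef]
  push_cast
  ring

theorem wDzBar_bCoef_add_mul_aCoef (hu : DifferentiableAt ℝ (fun w => (u w : ℂ)) z)
    (hξ : DifferentiableAt ℝ ξ z) (hh : DifferentiableAt ℝ (fun w => (h w : ℂ)) z) :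
    wDzBar (bCoef u ξ h) z + wDzBar (fun w => (u w : ℂ)) z * aCoef u ξ h z
      = (Real.exp (-u z) * wDzBar ξ z - Real.exp (u z) * conj (wDz (fun w => (h w : ℂ)) z))
          / (√2 : ℝ) := by
  rw [bCoef_eq]
  simp (disch := fun_prop) only [wDzBar_sub, wDzBar_mul, wDzBar_cexp, wDzBar_neg, wDzBar_const,
    wDzBar_ofReal_eq_conj_wDz]
  simp only [aCoef]
  push_cast
  ring

theorem ofReal_exp_div_eq (u : ℂ → ℝ) (c : ℝ) :
    (fun w => ((Real.exp (u w) / c : ℝ) : ℂ)) = fun w => Complex.exp (u w) * (c : ℂ)⁻¹ := by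
  funext w
  push_cast
  ring

theorem wDzBar_ofReal_exp_div (hu : DifferentiableAt ℝ (fun w => (u w : ℂ)) z) (c : ℝ) :
    wDzBar (fun w => ((Real.exp (u w) / c : ℝ) : ℂ)) z
      = ((Real.exp (u z) / c : ℝ) : ℂ) * wDzBar (fun w => (u w : ℂ)) z := by
  rw [ofReal_exp_div_eq]
  simp (disch := fun_prop) only [wDzBar_mul, wDzBar_cexp, wDzBar_const]
  push_cast
  ring

theorem wDzBar_APfun (hu : DifferentiableAt ℝ (fun w => (u w : ℂ)) z)
    (hh₁ : DifferentiableAt ℝ (fun w => (h₁ w : ℂ)) z)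
    (hh₂ : DifferentiableAt ℝ (fun w => (h₂ w : ℂ)) z)
    (hξ₁ : DifferentiableAt ℝ ξ₁ z) (hξ₂ : DifferentiableAt ℝ ξ₂ z) :
    wDzBar (APfun u h₁ h₂ ξ₁ ξ₂) z
      = Ap (((Real.exp (u z) / √2 : ℝ) : ℂ) * wDzBar (fun w => (u w : ℂ)) z)
          (wDzBar (aCoef u ξ₁ h₁) z) (wDzBar (aCoef u ξ₂ h₂) z)
          (wDzBar (bCoef u ξ₁ h₁) z) (wDzBar (bCoef u ξ₂ h₂) z) := by
  rw [← wDzBar_ofReal_exp_div hu]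
  refine wDzBar_Ap ?_ ?_ ?_ ?_ ?_ <;> simp only [ofReal_exp_div_eq, aCoef_eq, bCoef_eq] <;>
    fun_prop

theorem wDzBar_APfun_add_commutator {σ : ℂ → ℂ}
    (hu : DifferentiableAt ℝ (fun w => (u w : ℂ)) z)
    (hh₁ : DifferentiableAt ℝ (fun w => (h₁ w : ℂ)) z)
    (hh₂ : DifferentiableAt ℝ (fun w => (h₂ w : ℂ)) z)
    (hξ₁ : DifferentiableAt ℝ ξ₁ z) (hξ₂ : DifferentiableAt ℝ ξ₂ z)
    (codazzi₁ : (Real.exp (2 * u z) : ℂ) * (wDz (fun w => (h₁ w : ℂ)) z + h₂ z * σ z)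
        = wDzBar ξ₁ z + ξ₂ z * conj (σ z))
    (codazzi₂ : (Real.exp (2 * u z) : ℂ) * (wDz (fun w => (h₂ w : ℂ)) z - h₁ z * σ z)
        = wDzBar ξ₂ z - ξ₁ z * conj (σ z)) :
    let r : ℂ := (Real.exp (u z) / √2 : ℝ)
    let P₁ := wDz (fun w => (h₁ w : ℂ)) z + h₂ z * σ z
    let P₂ := wDz (fun w => (h₂ w : ℂ)) z - h₁ z * σ z
    wDzBar (APfun u h₁ h₂ ξ₁ ξ₂) z
        + (BKfun u σ z * APfun u h₁ h₂ ξ₁ ξ₂ z - APfun u h₁ h₂ ξ₁ ξ₂ z * BKfun u σ z)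
      = Ap 0 (r * (P₁ + conj P₁)) (r * (P₂ + conj P₂)) (r * (P₁ - conj P₁))
          (r * (P₂ - conj P₂)) := by
  intro r P₁ P₂
  have hexp : (Real.exp (-u z) : ℂ) * Real.exp (2 * u z) = Real.exp (u z) := by
    norm_cast
    rw [← Real.exp_add]
    ring_nf
  rw [wDzBar_APfun hu hh₁ hh₂ hξ₁ hξ₂, BKfun_eq_Bk]
  simp only [APfun]
  rw [Bk_mul_Ap_sub_Ap_mul_Bk, Ap_add]
  congr 1
  · ring
  · rw [← add_assoc, wDzBar_aCoef_add_mul_bCoef hu hξ₁ hh₁]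
    simp only [aCoef, r, P₁, map_add, map_mul, conj_ofReal, ofReal_div]
    linear_combination (-(Real.exp (-u z) : ℂ) / (√2 : ℝ)) * codazzi₁ + (P₁ / (√2 : ℝ)) * hexp
  · rw [← add_sub_assoc, wDzBar_aCoef_add_mul_bCoef hu hξ₂ hh₂]
    simp only [aCoef, r, P₂, map_sub, map_mul, conj_ofReal, ofReal_div]
    linear_combination (-(Real.exp (-u z) : ℂ) / (√2 : ℝ)) * codazzi₂ + (P₂ / (√2 : ℝ)) * hexp
  · rw [← add_assoc, wDzBar_bCoef_add_mul_aCoef hu hξ₁ hh₁]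
    simp only [bCoef, r, P₁, map_add, map_mul, conj_ofReal, ofReal_div]
    linear_combination (-(Real.exp (-u z) : ℂ) / (√2 : ℝ)) * codazzi₁ + (P₁ / (√2 : ℝ)) * hexp
  · rw [← add_sub_assoc, wDzBar_bCoef_add_mul_aCoef hu hξ₂ hh₂]
    simp only [bCoef, r, P₂, map_sub, map_mul, conj_ofReal, ofReal_div]
    linear_combination (-(Real.exp (-u z) : ℂ) / (√2 : ℝ)) * codazzi₂ + (P₂ / (√2 : ℝ)) * hexp

end AdaptedFrame

theorem gauss_map_normal_harmonic_iff_parallel_mean_curvature_general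
    (U : Set ℂ)
    (u h₁ h₂ : ℂ → ℝ) (ξ₁ ξ₂ σ : ℂ → ℂ)
    (hu : ∀ z ∈ U, DifferentiableAt ℝ (fun w => (u w : ℂ)) z)
    (hh₁ : ∀ z ∈ U, DifferentiableAt ℝ (fun w => (h₁ w : ℂ)) z)
    (hh₂ : ∀ z ∈ U, DifferentiableAt ℝ (fun w => (h₂ w : ℂ)) z)
    (hξ₁ : ∀ z ∈ U, DifferentiableAt ℝ ξ₁ z)
    (hξ₂ : ∀ z ∈ U, DifferentiableAt ℝ ξ₂ z)
    (codazzi₁ : ∀ z ∈ U,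
      (Real.exp (2 * u z) : ℂ) * (wDz (fun w => (h₁ w : ℂ)) z + (h₂ z : ℂ) * σ z)
        = wDzBar ξ₁ z + ξ₂ z * (starRingEnd ℂ) (σ z))
    (codazzi₂ : ∀ z ∈ U,
      (Real.exp (2 * u z) : ℂ) * (wDz (fun w => (h₂ w : ℂ)) z - (h₁ z : ℂ) * σ z)
        = wDzBar ξ₂ z - ξ₁ z * (starRingEnd ℂ) (σ z)) :
    (∀ z ∈ U,
        wDzBar (APfun u h₁ h₂ ξ₁ ξ₂) z
          + (BKfun u σ z * APfun u h₁ h₂ ξ₁ ξ₂ z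
              - APfun u h₁ h₂ ξ₁ ξ₂ z * BKfun u σ z) = 0)
      ↔ (∀ z ∈ U,
          wDz (fun w => (h₁ w : ℂ)) z + (h₂ z : ℂ) * σ z = 0 ∧
          wDz (fun w => (h₂ w : ℂ)) z - (h₁ z : ℂ) * σ z = 0) := by
  refine forall₂_congr fun z hz => ?_
  have hr : ((Real.exp (u z) / √2 : ℝ) : ℂ) ≠ 0 := ofReal_ne_zero.2 (by positivity)
  rw [wDzBar_APfun_add_commutator (hu z hz) (hh₁ z hz) (hh₂ z hz) (hξ₁ z hz) (hξ₂ z hz)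
    (codazzi₁ z hz) (codazzi₂ z hz), Ap_eq_zero_iff]
  simp only [true_and, mul_eq_zero, hr, false_or]
  rw [← and_assoc, and_and_and_comm, add_conj_eq_zero_and_sub_conj_eq_zero_iff,
    add_conj_eq_zero_and_sub_conj_eq_zero_iff]

/-- Ruh–Vilms for surfaces in S⁴: the Gauss map is normal-harmonic,
i.e. ∂̄A_𝔭 + [B_𝔨, A_𝔭] = 0, iff the mean curvature vector is parallel,
i.e. ∂h₁ + h₂σ = 0 and ∂h₂ − h₁σ = 0. -/
theorem gauss_map_normal_harmonic_iff_parallel_mean_curvature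
    (U : Set ℂ) (hU : IsOpen U)
    (u h₁ h₂ : ℂ → ℝ) (ξ₁ ξ₂ σ : ℂ → ℂ)
    (hu : ∀ z ∈ U, DifferentiableAt ℝ (fun w => (u w : ℂ)) z)
    (hh₁ : ∀ z ∈ U, DifferentiableAt ℝ (fun w => (h₁ w : ℂ)) z)
    (hh₂ : ∀ z ∈ U, DifferentiableAt ℝ (fun w => (h₂ w : ℂ)) z)
    (hξ₁ : ∀ z ∈ U, DifferentiableAt ℝ ξ₁ z)
    (hξ₂ : ∀ z ∈ U, DifferentiableAt ℝ ξ₂ z)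
    (hσ : ∀ z ∈ U, DifferentiableAt ℝ σ z)
    (codazzi₁ : ∀ z ∈ U,
      (Real.exp (2 * u z) : ℂ) * (wDz (fun w => (h₁ w : ℂ)) z + (h₂ z : ℂ) * σ z)
        = wDzBar ξ₁ z + ξ₂ z * (starRingEnd ℂ) (σ z))
    (codazzi₂ : ∀ z ∈ U,
      (Real.exp (2 * u z) : ℂ) * (wDz (fun w => (h₂ w : ℂ)) z - (h₁ z : ℂ) * σ z)
        = wDzBar ξ₂ z - ξ₁ z * (starRingEnd ℂ) (σ z)) :
    (∀ z ∈ U,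
        wDzBar (APfun u h₁ h₂ ξ₁ ξ₂) z
          + (BKfun u σ z * APfun u h₁ h₂ ξ₁ ξ₂ z
              - APfun u h₁ h₂ ξ₁ ξ₂ z * BKfun u σ z) = 0)
      ↔ (∀ z ∈ U,
          wDz (fun w => (h₁ w : ℂ)) z + (h₂ z : ℂ) * σ z = 0 ∧
          wDz (fun w => (h₂ w : ℂ)) z - (h₁ z : ℂ) * σ z = 0) :=
  gauss_map_normal_harmonic_iff_parallel_mean_curvature_general U u h₁ h₂ ξ₁ ξ₂ σ hu hh₁ hh₂ hξ₁ hξ₂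
    codazzi₁ codazzi₂
end
end

section
/- Let r ∈ ℝ and a₁, a₂, b₁, b₂ ∈ ℂ satisfy Im(a₁) = Im(b₁) and Im(a₂) = Im(b₂). Let A := A_p(r, a₁, a₂, b₁, b₂) and let B be the entrywise complex conjugate of A. Then every entry of the commutator A·B − B·A vanishes except possibly the entries at positions (1,2), (2,1), (3,4), (4,3); that is, the 𝔭-component of [A, B] in the reductive splitting 𝔰𝔬₅ = 𝔨 ⊕ 𝔭 (where 𝔨 consists of matrices supported on the positions (1,2), (2,1), (3,4), (4,3)) is zero. (This is the special algebraic property [α′_𝔭 ∧ α″_𝔭]_𝔭 = 0 enjoyed by frames of Gauss maps of conformal immersions into S⁴.) -/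
open Complex Matrix

noncomputable section

attribute [local instance] Matrix.normedAddCommGroup Matrix.normedSpace

/-! With `M = A * conj A` the commutator is `M - conj M = 2i · Im M`, so it suffices that the
relevant entries of `M` are real. `A` is skew-symmetric, hence `conj A = -Aᴴ` and `M = -A * Aᴴ` is
Hermitian: its diagonal is real and `Im M j i = -Im M i j`. `A` only connects the indices `{1, 2}`
with `{0, 3, 4}`, so `M` vanishes between these two blocks. What is left is row `0`, with entries
`-2r²`, `0` and `r (conj aₖ - conj bₖ)`, which are real precisely because `Im aₖ = Im bₖ`. -/

namespace Matrix

variable {n : Type*} [Fintype n]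

theorem mul_apply_eq_zero_of_bipartite {R : Type*} [NonUnitalNonAssocSemiring R]
    (side : n → Bool) {A B : Matrix n n R} (hA : ∀ i k, side i = side k → A i k = 0)
    (hB : ∀ k j, side k = side j → B k j = 0) {i j : n} (hij : side i ≠ side j) :
    (A * B) i j = 0 := by
  refine Finset.sum_eq_zero fun k _ => ?_
  by_cases hik : side i = side k
  · simp [hA i k hik]
  · have hkj : side k = side j := by
      revert hik hij; cases side i <;> cases side k <;> cases side j <;> simp
    simp [hB k j hkj]

theorem isHermitian_mul_map_star_of_transpose_eq_neg {R : Type*} [CommRing R] [StarRing R]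
    {A : Matrix n n R} (hA : Aᵀ = -A) : (A * A.map (starRingEnd R)).IsHermitian := by
  have hconj : A.map (starRingEnd R) = -Aᴴ := by
    ext i j
    have hji : A j i = -A i j := by simpa using congrFun₂ hA i j
    simp [hji, starRingEnd_apply]
  rw [hconj, Matrix.mul_neg]
  exact (isHermitian_mul_conjTranspose_self A).neg

theorem commutator_map_conj_apply (A : Matrix n n ℂ) (i j : n) :
    (A * A.map (starRingEnd ℂ) - A.map (starRingEnd ℂ) * A) i j =
      (2 * ((A * A.map (starRingEnd ℂ)) i j).im : ℝ) * Complex.I := by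
  have hswap :
      A.map (starRingEnd ℂ) * A = (A * A.map (starRingEnd ℂ)).map (starRingEnd ℂ) := by
    ext i j
    simp [mul_apply]
  rw [hswap, sub_apply, map_apply, Complex.sub_conj]

end Matrix

def apSide : Fin 5 → Bool := ![false, true, true, false, false]

theorem transpose_Ap (r a₁ a₂ b₁ b₂ : ℂ) : (Ap r a₁ a₂ b₁ b₂)ᵀ = -Ap r a₁ a₂ b₁ b₂ := by
  ext i j
  fin_cases i <;> fin_cases j <;> simp [Ap]

theorem Ap_apply_eq_zero_of_apSide_eq (r a₁ a₂ b₁ b₂ : ℂ) {i k : Fin 5}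
    (h : apSide i = apSide k) : Ap r a₁ a₂ b₁ b₂ i k = 0 := by
  fin_cases i <;> fin_cases k <;> simp_all [Ap, apSide]

theorem im_Ap_mul_map_conj_zero_apply (r : ℝ) {a₁ a₂ b₁ b₂ : ℂ}
    (h₁ : a₁.im = b₁.im) (h₂ : a₂.im = b₂.im) (k : Fin 5) :
    ((Ap r a₁ a₂ b₁ b₂ * (Ap r a₁ a₂ b₁ b₂).map (starRingEnd ℂ)) 0 k).im = 0 := by
  fin_cases k <;> simp [Ap, mul_apply, Fin.sum_univ_five, h₁, h₂]

theorem apSide_ne_of_not_k_position : ∀ i j : Fin 5, i ≠ 0 → j ≠ 0 → i ≠ j →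
    ((i, j) : Fin 5 × Fin 5) ≠ (1, 2) → ((i, j) : Fin 5 × Fin 5) ≠ (2, 1) →
    ((i, j) : Fin 5 × Fin 5) ≠ (3, 4) → ((i, j) : Fin 5 × Fin 5) ≠ (4, 3) →
    apSide i ≠ apSide j := by
  decide

/-- the special property [α'_𝔭 ∧ α''_𝔭]_𝔭 = 0 of Gauss-map frames:
the commutator of A_𝔭 with its entrywise conjugate is supported on the
𝔨-positions (1,2), (2,1), (3,4), (4,3). -/
theorem commutator_Ap_conj_p_part_vanishes
    (r : ℝ) (a₁ a₂ b₁ b₂ : ℂ)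
    (h₁ : a₁.im = b₁.im) (h₂ : a₂.im = b₂.im)
    (A B : Matrix (Fin 5) (Fin 5) ℂ)
    (hA : A = Ap (r : ℂ) a₁ a₂ b₁ b₂)
    (hB : B = A.map (starRingEnd ℂ)) :
    ∀ i j : Fin 5,
      ((i, j) : Fin 5 × Fin 5) ≠ (1, 2) → ((i, j) : Fin 5 × Fin 5) ≠ (2, 1) →
      ((i, j) : Fin 5 × Fin 5) ≠ (3, 4) → ((i, j) : Fin 5 × Fin 5) ≠ (4, 3) →
      (A * B - B * A) i j = 0 := by
  subst hA hB
  intro i j h12 h21 h34 h43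
  suffices hM : ((Ap r a₁ a₂ b₁ b₂ * (Ap r a₁ a₂ b₁ b₂).map (starRingEnd ℂ)) i j).im = 0 by
    rw [commutator_map_conj_apply, hM]
    simp
  have hHerm := isHermitian_mul_map_star_of_transpose_eq_neg (transpose_Ap r a₁ a₂ b₁ b₂)
  have hrow := im_Ap_mul_map_conj_zero_apply r h₁ h₂
  by_cases hi : i = 0
  · exact hi ▸ hrow j
  by_cases hj : j = 0
  · rw [hj, ← hHerm.apply, Complex.star_def, Complex.conj_im, hrow, neg_zero]
  by_cases hij : i = j
  · subst hij
    exact Complex.conj_eq_iff_im.mp (hHerm.apply i i)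
  have hside := apSide_ne_of_not_k_position i j hi hj hij h12 h21 h34 h43
  rw [mul_apply_eq_zero_of_bipartite apSide
    (fun i k h => Ap_apply_eq_zero_of_apSide_eq _ _ _ _ _ h)
    (fun k j h => by simp [Ap_apply_eq_zero_of_apSide_eq _ _ _ _ _ h]) hside, Complex.zero_im]
end
end

section
/- Let U ⊆ ℂ be open and let A_p, B_p, A_k, B_k : ℂ → Matrix (Fin 5) (Fin 5) ℂ be ℝ-differentiable on U. Then the following are equivalent: (i) on U one has ∂̄A_p + (B_k·A_p − A_p·B_k) = 0, ∂B_p + (A_k·B_p − B_p·A_k) = 0, and ∂̄A_k − ∂B_k = (A_k·B_k − B_k·A_k) + (A_p·B_p − B_p·A_p); (ii) for every λ ∈ ℂ with |λ| = 1, the matrices A_λ := λ⁻¹·A_p + A_k and B_λ := λ·B_p + B_k satisfy the zero-curvature (flatness) equation ∂̄A_λ − ∂B_λ = A_λ·B_λ − B_λ·A_λ on U. (This expresses that the normal-harmonic map equation for Gauss maps, together with the Maurer–Cartan structure equations, is equivalent to a loop of zero-curvature equations, i.e. complete integrability.) -/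
/-!
Both Wirtinger derivatives are ℂ-linear, so for `λ ≠ 0` the curvature
`∂̄A_λ − ∂B_λ − [A_λ, B_λ]` of the loop is the Laurent polynomial `λ⁻¹ X − λ Y + Z`, whose
coefficients `X`, `Y`, `Z` are exactly the three equations of (i). A Laurent polynomial of this
shape vanishes on the unit circle iff its coefficients vanish: evaluating at `λ = 1, −1, i`
already separates them.
-/

open Complex Matrix

noncomputable section

attribute [local instance] Matrix.normedAddCommGroup Matrix.normedSpace

section Wirtinger

variable {E : Type*} [NormedAddCommGroup E] [NormedSpace ℂ E] {f g : ℂ → E} {z : ℂ}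

theorem wDzBar_smul_add (c : ℂ) (hf : DifferentiableAt ℝ f z) (hg : DifferentiableAt ℝ g z) :
    wDzBar (fun w => c • f w + g w) z = c • wDzBar f z + wDzBar g z := by
  unfold wDzBar
  rw [fderiv_fun_add (f := fun w => c • f w) (hf.const_smul c) hg, fderiv_fun_const_smul hf c]
  simp only [_root_.add_apply, FunLike.coe_smul, Pi.smul_apply]
  module

theorem wDz_smul_add (c : ℂ) (hf : DifferentiableAt ℝ f z) (hg : DifferentiableAt ℝ g z) :
    wDz (fun w => c • f w + g w) z = c • wDz f z + wDz g z := by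
  unfold wDz
  rw [fderiv_fun_add (f := fun w => c • f w) (hf.const_smul c) hg, fderiv_fun_const_smul hf c]
  simp only [_root_.add_apply, FunLike.coe_smul, Pi.smul_apply]
  module

end Wirtinger

theorem loop_curvature_eq_laurent {𝕜 R : Type*} [Field 𝕜] [Ring R] [Algebra 𝕜 R]
    {lam : 𝕜} (hlam : lam ≠ 0) (a b c d P Q K L : R) :
    lam⁻¹ • a + c - (lam • b + d)
        - ((lam⁻¹ • P + K) * (lam • Q + L) - (lam • Q + L) * (lam⁻¹ • P + K))
      = lam⁻¹ • (a + (L * P - P * L)) - lam • (b + (K * Q - Q * K))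
        + (c - d - ((K * L - L * K) + (P * Q - Q * P))) := by
  simp only [add_mul, mul_add, smul_mul_assoc, mul_smul_comm, smul_smul, inv_mul_cancel₀ hlam,
    mul_inv_cancel₀ hlam, one_smul, smul_add, smul_sub]
  abel

theorem laurent_eq_zero_on_unit_circle_iff {M : Type*} [AddCommGroup M] [Module ℂ M]
    (X Y Z : M) :
    (∀ lam : ℂ, ‖lam‖ = 1 → lam⁻¹ • X - lam • Y + Z = 0) ↔ X = 0 ∧ Y = 0 ∧ Z = 0 := by
  refine ⟨fun h => ?_, fun ⟨hX, hY, hZ⟩ _ _ => by simp [hX, hY, hZ]⟩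
  have e1 : X - Y + Z = 0 := by simpa using h 1 (by simp)
  have em1 : -X + Y + Z = 0 := by simpa [sub_eq_add_neg] using h (-1) (by simp)
  have ei : -(I • X) - I • Y + Z = 0 := by simpa using h I (by simp)
  refine ⟨?_, ?_, ?_⟩
  · linear_combination (norm := match_scalars <;> ring_nf <;> simp [I_sq])
      ((1 - I) / 4 : ℂ) • e1 + ((-1 - I) / 4 : ℂ) • em1 + (I / 2 : ℂ) • ei
  · linear_combination (norm := match_scalars <;> ring_nf <;> simp [I_sq])
      ((-1 - I) / 4 : ℂ) • e1 + ((1 - I) / 4 : ℂ) • em1 + (I / 2 : ℂ) • ei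
  · linear_combination (norm := module) (2⁻¹ : ℂ) • e1 + (2⁻¹ : ℂ) • em1

theorem harmonicity_iff_loop_of_zero_curvature_general
    (U : Set ℂ)
    (Ap' Bp' Ak' Bk' : ℂ → Matrix (Fin 5) (Fin 5) ℂ)
    (hAp : ∀ z ∈ U, DifferentiableAt ℝ Ap' z)
    (hBp : ∀ z ∈ U, DifferentiableAt ℝ Bp' z)
    (hAk : ∀ z ∈ U, DifferentiableAt ℝ Ak' z)
    (hBk : ∀ z ∈ U, DifferentiableAt ℝ Bk' z) :
    ((∀ z ∈ U, wDzBar Ap' z + (Bk' z * Ap' z - Ap' z * Bk' z) = 0) ∧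
     (∀ z ∈ U, wDz Bp' z + (Ak' z * Bp' z - Bp' z * Ak' z) = 0) ∧
     (∀ z ∈ U, wDzBar Ak' z - wDz Bk' z
        = (Ak' z * Bk' z - Bk' z * Ak' z) + (Ap' z * Bp' z - Bp' z * Ap' z)))
    ↔ (∀ lam : ℂ, ‖lam‖ = 1 → ∀ z ∈ U,
        wDzBar (fun w => lam⁻¹ • Ap' w + Ak' w) z
          - wDz (fun w => lam • Bp' w + Bk' w) z
        = (lam⁻¹ • Ap' z + Ak' z) * (lam • Bp' z + Bk' z)
          - (lam • Bp' z + Bk' z) * (lam⁻¹ • Ap' z + Ak' z)) := by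
  have flat_iff : ∀ z ∈ U, ∀ lam : ℂ, ‖lam‖ = 1 →
      (wDzBar (fun w => lam⁻¹ • Ap' w + Ak' w) z - wDz (fun w => lam • Bp' w + Bk' w) z
          = (lam⁻¹ • Ap' z + Ak' z) * (lam • Bp' z + Bk' z)
            - (lam • Bp' z + Bk' z) * (lam⁻¹ • Ap' z + Ak' z) ↔
        lam⁻¹ • (wDzBar Ap' z + (Bk' z * Ap' z - Ap' z * Bk' z))
          - lam • (wDz Bp' z + (Ak' z * Bp' z - Bp' z * Ak' z))
          + (wDzBar Ak' z - wDz Bk' z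
            - ((Ak' z * Bk' z - Bk' z * Ak' z) + (Ap' z * Bp' z - Bp' z * Ap' z))) = 0) := by
    intro z hz lam hlam
    rw [wDzBar_smul_add _ (hAp z hz) (hAk z hz), wDz_smul_add _ (hBp z hz) (hBk z hz),
      ← sub_eq_zero, loop_curvature_eq_laurent (norm_ne_zero_iff.mp (by simp [hlam]))]
  simp only [← forall_and, ← sub_eq_zero (a := wDzBar Ak' _ - wDz Bk' _),
    ← laurent_eq_zero_on_unit_circle_iff]
  exact ⟨fun h lam hlam z hz => (flat_iff z hz lam hlam).2 (h z hz lam hlam),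
    fun h z hz lam hlam => (flat_iff z hz lam hlam).1 (h lam hlam z hz)⟩

/-- complete integrability: the harmonic map equation together with the
Maurer–Cartan structure equations holds iff the loop of connections
d + λ⁻¹α'_𝔭 + α_𝔨 + λα''_𝔭 is flat for every λ ∈ S¹. -/
theorem harmonicity_iff_loop_of_zero_curvature
    (U : Set ℂ) (hU : IsOpen U)
    (Ap' Bp' Ak' Bk' : ℂ → Matrix (Fin 5) (Fin 5) ℂ)
    (hAp : ∀ z ∈ U, DifferentiableAt ℝ Ap' z)
    (hBp : ∀ z ∈ U, DifferentiableAt ℝ Bp' z)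
    (hAk : ∀ z ∈ U, DifferentiableAt ℝ Ak' z)
    (hBk : ∀ z ∈ U, DifferentiableAt ℝ Bk' z) :
    ((∀ z ∈ U, wDzBar Ap' z + (Bk' z * Ap' z - Ap' z * Bk' z) = 0) ∧
     (∀ z ∈ U, wDz Bp' z + (Ak' z * Bp' z - Bp' z * Ak' z) = 0) ∧
     (∀ z ∈ U, wDzBar Ak' z - wDz Bk' z
        = (Ak' z * Bk' z - Bk' z * Ak' z) + (Ap' z * Bp' z - Bp' z * Ap' z)))
    ↔ (∀ lam : ℂ, ‖lam‖ = 1 → ∀ z ∈ U,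
        wDzBar (fun w => lam⁻¹ • Ap' w + Ak' w) z
          - wDz (fun w => lam • Bp' w + Bk' w) z
        = (lam⁻¹ • Ap' z + Ak' z) * (lam • Bp' z + Bk' z)
          - (lam • Bp' z + Bk' z) * (lam⁻¹ • Ap' z + Ak' z)) :=
  harmonicity_iff_loop_of_zero_curvature_general U Ap' Bp' Ak' Bk' hAp hBp hAk hBk
end
end

section
/- Let U ⊆ ℂ be open, u : ℂ → ℝ, and λ ∈ ℂ with |λ| = 1. Let F : ℂ → Matrix (Fin 5) (Fin 5) ℝ satisfy F(z)ᵀ·F(z) = 1 for all z ∈ U, denote by F₀, F₁, F₂ the columns of F regarded as maps into ℂ⁵ (Fin 5 → ℂ), and suppose f := F₀ is ℝ-differentiable on U with Wirtinger derivative ∂f(z) = λ⁻¹·(e^{u(z)}/√2)·(F₁(z) − i·F₂(z)) for all z ∈ U. Then for every z ∈ U: Σᵢ (∂f(z))ᵢ² = 0 and Σᵢ (∂f(z))ᵢ·conj((∂f(z))ᵢ) = e^{2u(z)}. (This shows that every member f_λ of the associated family of an immersion with normal-harmonic Gauss map is conformal with the same conformal factor e^{2u}.) -/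
open Complex Matrix

noncomputable section

attribute [local instance] Matrix.normedAddCommGroup Matrix.normedSpace

/-- The j-th column of a real-matrix-valued map, regarded as a map into ℂ⁵. -/
def col (F : ℂ → Matrix (Fin 5) (Fin 5) ℝ) (j : Fin 5) : ℂ → Fin 5 → ℂ :=
  fun z i => ((F z i j : ℝ) : ℂ)

/-! ∂f is a complex multiple of F₁ − iF₂, and F₁, F₂ are orthonormal real vectors.
For real a, b the complex vector a − ib is isotropic when |a| = |b| and a ⊥ b, and its
Hermitian square norm is |a|² + |b|². With |λ| = 1 and (e^u/√2)² = e^{2u}/2 this gives both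
identities. -/

theorem Matrix.sum_mul_of_transpose_mul_self_eq_one {m n R : Type*} [Fintype m]
    [DecidableEq n] [CommSemiring R] {M : Matrix m n R} (h : Mᵀ * M = 1) (j k : n) :
    ∑ i, M i j * M i k = (1 : Matrix n n R) j k := by
  simpa [mul_apply] using congrFun (congrFun h j) k

section IsotropicVector

variable {n : Type*} [Fintype n] (c : ℂ) (a b : n → ℝ)

theorem sum_sq_mul_sub_I_mul_eq_zero (hnorm : ∑ i, a i ^ 2 = ∑ i, b i ^ 2)
    (horth : ∑ i, a i * b i = 0) : ∑ i, (c * (a i - I * b i)) ^ 2 = 0 := by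
  calc ∑ i, (c * (a i - I * b i)) ^ 2
      = c ^ 2 * (((∑ i, a i ^ 2 - ∑ i, b i ^ 2 : ℝ) : ℂ) - 2 * I * ((∑ i, a i * b i : ℝ) : ℂ)) := by
        push_cast
        simp only [Finset.mul_sum, ← Finset.sum_sub_distrib]
        refine Finset.sum_congr rfl fun i _ => ?_
        linear_combination c ^ 2 * (b i : ℂ) ^ 2 * I_sq
    _ = 0 := by simp [hnorm, horth]

theorem sum_mul_sub_I_mul_mul_conj :
    ∑ i, c * (a i - I * b i) * starRingEnd ℂ (c * (a i - I * b i))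
      = normSq c * (∑ i, a i ^ 2 + ∑ i, b i ^ 2 : ℝ) := by
  push_cast
  simp only [Finset.mul_sum, ← Finset.sum_add_distrib]
  refine Finset.sum_congr rfl fun i _ => ?_
  simp only [map_mul, map_sub, conj_ofReal, conj_I]
  linear_combination ((a i : ℂ) ^ 2 + (b i : ℂ) ^ 2) * mul_conj c
    - c * starRingEnd ℂ c * (b i : ℂ) ^ 2 * I_sq

end IsotropicVector

theorem normSq_inv_mul_exp_div_sqrt_two {lam : ℂ} (hlam : ‖lam‖ = 1) (t : ℝ) :
    normSq (lam⁻¹ * ((Real.exp t / Real.sqrt 2 : ℝ) : ℂ)) = Real.exp (2 * t) / 2 := by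
  rw [map_mul, map_inv₀, normSq_eq_norm_sq, hlam, normSq_ofReal, div_mul_div_comm,
    Real.mul_self_sqrt zero_le_two, ← Real.exp_add, two_mul]
  simp

theorem associated_family_conformal_general
    (U : Set ℂ) (u : ℂ → ℝ)
    (lam : ℂ) (hlam : ‖lam‖ = 1)
    (F : ℂ → Matrix (Fin 5) (Fin 5) ℝ)
    (horth : ∀ z ∈ U, (F z)ᵀ * F z = 1)
    (hder : ∀ z ∈ U, wDz (_root_.col F 0) z
      = fun i => lam⁻¹ * ((Real.exp (u z) / Real.sqrt 2 : ℝ) : ℂ)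
          * (_root_.col F 1 z i - Complex.I * _root_.col F 2 z i)) :
    ∀ z ∈ U,
      (∑ i : Fin 5, (wDz (_root_.col F 0) z i) ^ 2 = 0) ∧
      (∑ i : Fin 5, wDz (_root_.col F 0) z i * (starRingEnd ℂ) (wDz (_root_.col F 0) z i)
        = (Real.exp (2 * u z) : ℂ)) := by
  intro z hz
  have hcols := Matrix.sum_mul_of_transpose_mul_self_eq_one (horth z hz)
  have h₁ : ∑ i, F z i 1 ^ 2 = 1 := by simpa [sq] using hcols 1 1
  have h₂ : ∑ i, F z i 2 ^ 2 = 1 := by simpa [sq] using hcols 2 2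
  have h₁₂ : ∑ i, F z i 1 * F z i 2 = 0 := by simpa using hcols 1 2
  simp only [hder z hz, _root_.col]
  refine ⟨sum_sq_mul_sub_I_mul_eq_zero _ (F z · 1) (F z · 2) (h₁.trans h₂.symm) h₁₂, ?_⟩
  rw [sum_mul_sub_I_mul_mul_conj, normSq_inv_mul_exp_div_sqrt_two hlam, h₁, h₂]
  push_cast
  ring

/-- every member f_λ of the associated family is conformal with the
same conformal factor e^{2u}. -/
theorem associated_family_conformal
    (U : Set ℂ) (hU : IsOpen U) (u : ℂ → ℝ)
    (lam : ℂ) (hlam : ‖lam‖ = 1)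
    (F : ℂ → Matrix (Fin 5) (Fin 5) ℝ)
    (horth : ∀ z ∈ U, (F z)ᵀ * F z = 1)
    (hdiff : ∀ z ∈ U, DifferentiableAt ℝ (_root_.col F 0) z)
    (hder : ∀ z ∈ U, wDz (_root_.col F 0) z
      = fun i => lam⁻¹ * ((Real.exp (u z) / Real.sqrt 2 : ℝ) : ℂ)
          * (_root_.col F 1 z i - Complex.I * _root_.col F 2 z i)) :
    ∀ z ∈ U,
      (∑ i : Fin 5, (wDz (_root_.col F 0) z i) ^ 2 = 0) ∧
      (∑ i : Fin 5, wDz (_root_.col F 0) z i * (starRingEnd ℂ) (wDz (_root_.col F 0) z i)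
        = (Real.exp (2 * u z) : ℂ)) :=
  associated_family_conformal_general U u lam hlam F horth hder
end
end

section
/- Let U ⊆ ℂ be open, let u, h₁, h₂ : ℂ → ℝ and ξ₁, ξ₂, σ : ℂ → ℂ be ℝ-differentiable on U, set aᵢ := (e^{−u}·ξᵢ + e^{u}·hᵢ)/√2 and bᵢ := (e^{−u}·ξᵢ − e^{u}·hᵢ)/√2 (i = 1,2), and let λ ∈ ℂ with |λ| = 1. Let A_k be the 5×5 complex matrix whose only nonzero entries are (1,2) ↦ i·∂u, (2,1) ↦ −i·∂u, (3,4) ↦ σ, (4,3) ↦ −σ, and set A_λ := λ⁻¹·A_p(e^{u}/√2, a₁, a₂, b₁, b₂) + A_k. Let F : ℂ → Matrix (Fin 5) (Fin 5) ℝ be ℝ-differentiable on U with F(z)ᵀ·F(z) = 1 on U and, regarding F as complex-matrix valued, ∂F = F·A_λ on U. Denote by f, N₁, N₂ the columns 0, 3, 4 of F regarded as maps into ℂ⁵. Then ∂f is ℝ-differentiable on U and for every z ∈ U: Σᵢ (∂(∂f)(z))ᵢ·(N₁(z))ᵢ = λ⁻²·ξ₁(z), Σᵢ (∂(∂f)(z))ᵢ·(N₂(z))ᵢ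 = λ⁻²·ξ₂(z), and Σᵢ (∂N₂(z))ᵢ·(N₁(z))ᵢ = σ(z). (This shows that along the associated family the (2,0)-part of the second fundamental form scales as ξᵢ^λ = λ⁻²·ξᵢ while the normal connection coefficient σ is unchanged.) -/
/-!
Regard F as a complex matrix Φ. Since Φ is orthogonal and ∂Φ = Φ A_λ, pairing ∂(Φ eⱼ) with Φ eₖ
gives the entry (A_λ)ₖⱼ; for j = 4, k = 3 this is σ. The first column of A_λ gives
∂f = λ⁻¹ (e^u/√2) (Φ e₁ − i Φ e₂). Differentiating once more, the term carrying the derivative of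
the coefficient is orthogonal to N₁ = Φ e₃ and N₂ = Φ e₄, and what remains is
λ⁻¹ (e^u/√2) · λ⁻¹ (aₖ + bₖ) = λ⁻² ξₖ, because aₖ + bₖ = √2 e^{−u} ξₖ.
-/

open Complex Matrix

noncomputable section

attribute [local instance] Matrix.normedAddCommGroup Matrix.normedSpace

def AKfun (u : ℂ → ℝ) (σ : ℂ → ℂ) (z : ℂ) : Matrix (Fin 5) (Fin 5) ℂ :=
  !![0, 0, 0, 0, 0;
     0, 0, Complex.I * wDz (fun w => (u w : ℂ)) z, 0, 0;
     0, -(Complex.I * wDz (fun w => (u w : ℂ)) z), 0, 0, 0;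
     0, 0, 0, 0, σ z;
     0, 0, 0, -σ z, 0]

def Alam (lam : ℂ) (u h₁ h₂ : ℂ → ℝ) (ξ₁ ξ₂ σ : ℂ → ℂ) (z : ℂ) :
    Matrix (Fin 5) (Fin 5) ℂ :=
  lam⁻¹ • Ap ((Real.exp (u z) / Real.sqrt 2 : ℝ) : ℂ)
      (aCoef u ξ₁ h₁ z) (aCoef u ξ₂ h₂ z) (bCoef u ξ₁ h₁ z) (bCoef u ξ₂ h₂ z)
    + AKfun u σ z

def toC (F : ℂ → Matrix (Fin 5) (Fin 5) ℝ) : ℂ → Matrix (Fin 5) (Fin 5) ℂ :=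
  fun z => (F z).map (fun x => (x : ℂ))

section Wirtinger

variable {E F : Type*} [NormedAddCommGroup E] [NormedSpace ℂ E]
  [NormedAddCommGroup F] [NormedSpace ℂ F] {G H : ℂ → E} {z : ℂ}

theorem Filter.EventuallyEq.wDz_eq (h : G =ᶠ[nhds z] H) : wDz G z = wDz H z := by
  simp only [wDz, h.fderiv_eq]

theorem ContinuousLinearMap.wDz_comp (L : E →L[ℂ] F) (hG : DifferentiableAt ℝ G z) :
    wDz (fun w => L (G w)) z = L (wDz G z) := by
  have hL : HasFDerivAt (fun w => L (G w)) ((L.restrictScalars ℝ).comp (fderiv ℝ G z)) z :=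
    (L.restrictScalars ℝ).hasFDerivAt.comp z hG.hasFDerivAt
  simp [wDz, hL.fderiv]

theorem wDz_add (hG : DifferentiableAt ℝ G z) (hH : DifferentiableAt ℝ H z) :
    wDz (fun w => G w + H w) z = wDz G z + wDz H z := by
  simp only [wDz, fderiv_fun_add hG hH, _root_.add_apply, smul_add, smul_sub]
  abel

theorem wDz_const_smul (hG : DifferentiableAt ℝ G z) (a : ℂ) :
    wDz (fun w => a • G w) z = a • wDz G z := by
  simp only [wDz, fderiv_fun_const_smul hG a, _root_.smul_apply, smul_sub,
    smul_comm a]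

theorem wDz_smul {c : ℂ → ℂ} (hc : DifferentiableAt ℝ c z) (hG : DifferentiableAt ℝ G z) :
    wDz (fun w => c w • G w) z = wDz c z • G z + c z • wDz G z := by
  simp only [wDz, fderiv_fun_smul hc hG, _root_.add_apply, _root_.smul_apply,
    ContinuousLinearMap.smulRight_apply]
  module

end Wirtinger

theorem Matrix.transpose_mul_dotProduct_transpose {R n : Type*} [CommRing R] [Fintype n]
    [DecidableEq n] {Φ : Matrix n n R} (h : Φᵀ * Φ = 1) (A : Matrix n n R) (j k : n) :
    (Φ * A)ᵀ j ⬝ᵥ Φᵀ k = A k j := by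
  calc (Φ * A)ᵀ j ⬝ᵥ Φᵀ k = ((Φ * A)ᵀ * Φ) j k := mul_apply'.symm
    _ = (Aᵀ * (Φᵀ * Φ)) j k := by rw [transpose_mul, Matrix.mul_assoc]
    _ = A k j := by rw [h, Matrix.mul_one, transpose_apply]

theorem Matrix.transpose_dotProduct_transpose {R n : Type*} [CommRing R] [Fintype n]
    [DecidableEq n] {Φ : Matrix n n R} (h : Φᵀ * Φ = 1) {j k : n} (hjk : j ≠ k) :
    Φᵀ j ⬝ᵥ Φᵀ k = 0 := by
  simpa [one_apply_ne' hjk] using transpose_mul_dotProduct_transpose h 1 j k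

theorem Matrix.transpose_map_ofReal_mul_self {n : Type*} [Fintype n] [DecidableEq n]
    {M : Matrix n n ℝ} (h : Mᵀ * M = 1) : (M.map ofReal)ᵀ * M.map ofReal = 1 := by
  calc (M.map ofReal)ᵀ * M.map ofReal = (Mᵀ * M).map ofRealHom := by
        rw [Matrix.map_mul, transpose_map]; rfl
    _ = 1 := by simp [h]

theorem DifferentiableAt.toC {F : ℂ → Matrix (Fin 5) (Fin 5) ℝ} {z : ℂ}
    (hF : DifferentiableAt ℝ F z) : DifferentiableAt ℝ (toC F) z :=
  differentiableAt_pi.2 fun i => differentiableAt_pi.2 fun j =>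
    ofRealCLM.differentiableAt.comp z (differentiableAt_pi.1 (differentiableAt_pi.1 hF i) j)

section MovingFrame

variable {m n : Type*} [Fintype m] [Fintype n] {Φ A : ℂ → Matrix n n ℂ} {z : ℂ}

def columnCLM (j : n) : Matrix m n ℂ →L[ℂ] (m → ℂ) :=
  ContinuousLinearMap.pi fun i => (ContinuousLinearMap.proj j).comp
    (ContinuousLinearMap.proj (R := ℂ) (φ := fun _ : m => n → ℂ) i)

theorem DifferentiableAt.transpose_apply {Ψ : ℂ → Matrix m n ℂ} (hΨ : DifferentiableAt ℝ Ψ z)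
    (j : n) : DifferentiableAt ℝ (fun w => (Ψ w)ᵀ j) z :=
  ((columnCLM j).restrictScalars ℝ : Matrix m n ℂ →L[ℝ] (m → ℂ)).differentiableAt.comp z hΨ

theorem wDz_transpose_apply {Ψ : ℂ → Matrix m n ℂ} (hΨ : DifferentiableAt ℝ Ψ z) (j : n) :
    wDz (fun w => (Ψ w)ᵀ j) z = (wDz Ψ z)ᵀ j :=
  (columnCLM j).wDz_comp hΨ

variable [DecidableEq n]

theorem wDz_transpose_dotProduct (hΦ : DifferentiableAt ℝ Φ z) (hMC : wDz Φ z = Φ z * A z)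
    (horth : (Φ z)ᵀ * Φ z = 1) (j k : n) :
    wDz (fun w => (Φ w)ᵀ j) z ⬝ᵥ (Φ z)ᵀ k = A z k j := by
  rw [wDz_transpose_apply hΦ, hMC, transpose_mul_dotProduct_transpose horth]

theorem wDz_smul_transpose_add_dotProduct {c : ℂ → ℂ} (hc : DifferentiableAt ℝ c z)
    (hΦ : DifferentiableAt ℝ Φ z) (hMC : wDz Φ z = Φ z * A z) (horth : (Φ z)ᵀ * Φ z = 1)
    (μ : ℂ) {p q k : n} (hp : p ≠ k) (hq : q ≠ k) :
    wDz (fun w => c w • ((Φ w)ᵀ p + μ • (Φ w)ᵀ q)) z ⬝ᵥ (Φ z)ᵀ k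
      = c z * (A z k p + μ * A z k q) := by
  have hq' := hΦ.transpose_apply q
  rw [wDz_smul hc ((hΦ.transpose_apply p).fun_add (hq'.fun_const_smul μ)),
    wDz_add (hΦ.transpose_apply p) (hq'.fun_const_smul μ), wDz_const_smul hq']
  simp only [add_dotProduct, smul_dotProduct, wDz_transpose_dotProduct hΦ hMC horth,
    transpose_dotProduct_transpose horth hp, transpose_dotProduct_transpose horth hq, smul_eq_mul]
  ring

end MovingFrame

theorem DifferentiableAt.ofReal_exp_div_sqrt_two {u : ℂ → ℝ} {z : ℂ}
    (hu : DifferentiableAt ℝ (fun w => (u w : ℂ)) z) :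
    DifferentiableAt ℝ (fun w => ((Real.exp (u w) / Real.sqrt 2 : ℝ) : ℂ)) z := by
  simpa only [div_eq_mul_inv, ofReal_mul, ofReal_exp] using hu.cexp.mul_const _

section AssociatedFamily

variable (lam : ℂ) (u h₁ h₂ : ℂ → ℝ) (ξ₁ ξ₂ σ : ℂ → ℂ) (z : ℂ)

theorem exp_div_sqrt_two_mul_aCoef_add_bCoef (ξ : ℂ → ℂ) (h : ℂ → ℝ) :
    ((Real.exp (u z) / Real.sqrt 2 : ℝ) : ℂ) * (aCoef u ξ h z + bCoef u ξ h z) = ξ z := by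
  have hsqrt : ((Real.sqrt 2 : ℝ) : ℂ) ^ 2 = 2 := by
    rw [← ofReal_pow, Real.sq_sqrt zero_le_two, ofReal_ofNat]
  have hexp : ((Real.exp (u z) : ℝ) : ℂ) * (Real.exp (-u z) : ℝ) = 1 := by
    rw [← ofReal_mul, ← Real.exp_add, add_neg_cancel, Real.exp_zero, ofReal_one]
  have hsqrt0 : ((Real.sqrt 2 : ℝ) : ℂ) ≠ 0 := by
    exact_mod_cast (by positivity : Real.sqrt 2 ≠ 0)
  simp only [aCoef, bCoef, ofReal_div]
  field_simp
  linear_combination (2 * ξ z) * hexp - ξ z * hsqrt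

theorem transpose_mul_Alam_apply_zero (Φ : Matrix (Fin 5) (Fin 5) ℂ) :
    (Φ * Alam lam u h₁ h₂ ξ₁ ξ₂ σ z)ᵀ 0
      = (lam⁻¹ * ((Real.exp (u z) / Real.sqrt 2 : ℝ) : ℂ)) • (Φᵀ 1 + (-I) • Φᵀ 2) := by
  ext i
  simp [Alam, Ap, AKfun, mul_apply, Fin.sum_univ_five]
  ring

theorem Alam_three_one_add_neg_I_mul :
    Alam lam u h₁ h₂ ξ₁ ξ₂ σ z 3 1 + -I * Alam lam u h₁ h₂ ξ₁ ξ₂ σ z 3 2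
      = lam⁻¹ * (aCoef u ξ₁ h₁ z + bCoef u ξ₁ h₁ z) := by
  simp [Alam, Ap, AKfun]
  linear_combination (-lam⁻¹ * bCoef u ξ₁ h₁ z) * I_mul_I

theorem Alam_four_one_add_neg_I_mul :
    Alam lam u h₁ h₂ ξ₁ ξ₂ σ z 4 1 + -I * Alam lam u h₁ h₂ ξ₁ ξ₂ σ z 4 2
      = lam⁻¹ * (aCoef u ξ₂ h₂ z + bCoef u ξ₂ h₂ z) := by
  simp [Alam, Ap, AKfun]
  linear_combination (-lam⁻¹ * bCoef u ξ₂ h₂ z) * I_mul_I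

theorem Alam_three_four : Alam lam u h₁ h₂ ξ₁ ξ₂ σ z 3 4 = σ z := by
  simp [Alam, Ap, AKfun]

end AssociatedFamily

theorem associated_family_second_fundamental_form_general
    (U : Set ℂ) (hU : IsOpen U)
    (u h₁ h₂ : ℂ → ℝ) (ξ₁ ξ₂ σ : ℂ → ℂ)
    (hu : ∀ z ∈ U, DifferentiableAt ℝ (fun w => (u w : ℂ)) z)
    (lam : ℂ)
    (F : ℂ → Matrix (Fin 5) (Fin 5) ℝ)
    (hF : ∀ z ∈ U, DifferentiableAt ℝ F z)
    (horth : ∀ z ∈ U, (F z)ᵀ * F z = 1)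
    (hMC : ∀ z ∈ U, wDz (toC F) z = toC F z * Alam lam u h₁ h₂ ξ₁ ξ₂ σ z) :
    (∀ z ∈ U, DifferentiableAt ℝ (fun w => wDz (_root_.col F 0) w) z) ∧
    (∀ z ∈ U,
      (∑ i : Fin 5, wDz (fun w => wDz (_root_.col F 0) w) z i * _root_.col F 3 z i
          = lam⁻¹ ^ 2 * ξ₁ z) ∧
      (∑ i : Fin 5, wDz (fun w => wDz (_root_.col F 0) w) z i * _root_.col F 4 z i
          = lam⁻¹ ^ 2 * ξ₂ z) ∧
      (∑ i : Fin 5, wDz (_root_.col F 4) z i * _root_.col F 3 z i = σ z)) := by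
  set Φ := toC F
  set c : ℂ → ℂ := fun w => lam⁻¹ * ((Real.exp (u w) / Real.sqrt 2 : ℝ) : ℂ)
  have hΦ (z) (hz : z ∈ U) : DifferentiableAt ℝ Φ z := (hF z hz).toC
  have hΦorth (z) (hz : z ∈ U) : (Φ z)ᵀ * Φ z = 1 := transpose_map_ofReal_mul_self (horth z hz)
  have hc (z) (hz : z ∈ U) : DifferentiableAt ℝ c z :=
    (hu z hz).ofReal_exp_div_sqrt_two.const_mul _
  have hdf (z) (hz : z ∈ U) : (fun w => wDz (_root_.col F 0) w)
      =ᶠ[nhds z] fun w => c w • ((Φ w)ᵀ 1 + (-I) • (Φ w)ᵀ 2) := by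
    filter_upwards [hU.mem_nhds hz] with w hw
    rw [← transpose_mul_Alam_apply_zero, ← hMC w hw]
    exact wDz_transpose_apply (hΦ w hw) 0
  refine ⟨fun z hz => (hdf z hz).differentiableAt_iff.2 ?_, fun z hz => ?_⟩
  · exact (hc z hz).smul (((hΦ z hz).transpose_apply 1).fun_add
      (((hΦ z hz).transpose_apply 2).fun_const_smul _))
  have hnormal (k : Fin 5) (h1k : 1 ≠ k) (h2k : 2 ≠ k) :
      wDz (fun w => wDz (_root_.col F 0) w) z ⬝ᵥ (Φ z)ᵀ k
        = c z * (Alam lam u h₁ h₂ ξ₁ ξ₂ σ z k 1 + -I * Alam lam u h₁ h₂ ξ₁ ξ₂ σ z k 2) := by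
    rw [(hdf z hz).wDz_eq]
    exact wDz_smul_transpose_add_dotProduct (hc z hz) (hΦ z hz) (hMC z hz) (hΦorth z hz) _
      h1k h2k
  refine ⟨?_, ?_, ?_⟩
  · rw [← exp_div_sqrt_two_mul_aCoef_add_bCoef u z ξ₁ h₁]
    refine (hnormal 3 (by decide) (by decide)).trans ?_
    rw [Alam_three_one_add_neg_I_mul]
    ring
  · rw [← exp_div_sqrt_two_mul_aCoef_add_bCoef u z ξ₂ h₂]
    refine (hnormal 4 (by decide) (by decide)).trans ?_
    rw [Alam_four_one_add_neg_I_mul]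
    ring
  · exact (wDz_transpose_dotProduct (hΦ z hz) (hMC z hz) (hΦorth z hz) 4 3).trans
      (Alam_three_four ..)

/-- along the associated family, the (2,0)-part of the second
fundamental form scales as ξᵢ^λ = λ⁻²ξᵢ while σ is unchanged. -/
theorem associated_family_second_fundamental_form
    (U : Set ℂ) (hU : IsOpen U)
    (u h₁ h₂ : ℂ → ℝ) (ξ₁ ξ₂ σ : ℂ → ℂ)
    (hu : ∀ z ∈ U, DifferentiableAt ℝ (fun w => (u w : ℂ)) z)
    (hh₁ : ∀ z ∈ U, DifferentiableAt ℝ (fun w => (h₁ w : ℂ)) z)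
    (hh₂ : ∀ z ∈ U, DifferentiableAt ℝ (fun w => (h₂ w : ℂ)) z)
    (hξ₁ : ∀ z ∈ U, DifferentiableAt ℝ ξ₁ z)
    (hξ₂ : ∀ z ∈ U, DifferentiableAt ℝ ξ₂ z)
    (hσ : ∀ z ∈ U, DifferentiableAt ℝ σ z)
    (lam : ℂ) (hlam : ‖lam‖ = 1)
    (F : ℂ → Matrix (Fin 5) (Fin 5) ℝ)
    (hF : ∀ z ∈ U, DifferentiableAt ℝ F z)
    (horth : ∀ z ∈ U, (F z)ᵀ * F z = 1)
    (hMC : ∀ z ∈ U, wDz (toC F) z = toC F z * Alam lam u h₁ h₂ ξ₁ ξ₂ σ z) :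
    (∀ z ∈ U, DifferentiableAt ℝ (fun w => wDz (_root_.col F 0) w) z) ∧
    (∀ z ∈ U,
      (∑ i : Fin 5, wDz (fun w => wDz (_root_.col F 0) w) z i * _root_.col F 3 z i
          = lam⁻¹ ^ 2 * ξ₁ z) ∧
      (∑ i : Fin 5, wDz (fun w => wDz (_root_.col F 0) w) z i * _root_.col F 4 z i
          = lam⁻¹ ^ 2 * ξ₂ z) ∧
      (∑ i : Fin 5, wDz (_root_.col F 4) z i * _root_.col F 3 z i = σ z)) :=
  associated_family_second_fundamental_form_general U hU u h₁ h₂ ξ₁ ξ₂ σ hu lam F hF horth hMC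
end
end

section
/- Let U ⊆ ℂ be open and let f : ℂ → EuclideanSpace ℝ (Fin 5) be twice continuously differentiable (ContDiff ℝ 2) on U, regarded componentwise as ℂ-valued, such that for all z ∈ U: Σᵢ fᵢ(z)² = 1 (f takes values in the unit sphere S⁴) and Σᵢ (∂f(z))ᵢ² = 0 (f is conformal). Then for every z ∈ U: (1) Σᵢ (∂̄(∂f)(z))ᵢ·(∂f(z))ᵢ = 0, (2) Σᵢ (∂̄(∂f)(z))ᵢ·conj((∂f(z))ᵢ) = 0, and (3) Σᵢ (∂̄(∂f)(z))ᵢ·fᵢ(z) = −Σᵢ (∂f(z))ᵢ·conj((∂f(z))ᵢ). (Hence f_{z̄z} has no tangential component and satisfies f_{z̄z} = −e^{2u}·f + e^{2u}·H with e^{2u} = ⟨f_z, f_{z̄}⟩, where H is the mean curvature vector.) -/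
/-!
Write `F` for `f` viewed in `ℂ⁵` and `⟨a, b⟩ = ∑ aᵢ bᵢ`. Since `F` is real, `∂̄F = conj ∂F`, and
for `C²` maps `∂∂̄ = ∂̄∂`. Each identity is the Leibniz rule applied to a pairing that is constant
on `U`: `∂̄⟨∂F, ∂F⟩ = 0` gives (1), `∂⟨∂̄F, ∂̄F⟩ = 0` (the conjugate of conformality) gives (2), and
`∂⟨F, F⟩ = 0` gives `⟨∂F, F⟩ = 0` on `U`, whose `∂̄`-derivative gives (3).
-/

open Complex

noncomputable section

/-- A map into ℝ⁵ regarded componentwise as a map into ℂ⁵. -/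
def cpx (f : ℂ → EuclideanSpace ℝ (Fin 5)) : ℂ → Fin 5 → ℂ :=
  fun z i => ((f z i : ℝ) : ℂ)

open Filter Topology

section Wirtinger

variable {E : Type*} [NormedAddCommGroup E] [NormedSpace ℂ E] {G : ℂ → E} {z : ℂ}

theorem wDz_eq_zero_of_eventuallyEq_const {c : E} (hG : G =ᶠ[𝓝 z] fun _ => c) :
    wDz G z = 0 := by
  simp [wDz, hG.fderiv_eq]

theorem wDzBar_eq_zero_of_eventuallyEq_const {c : E} (hG : G =ᶠ[𝓝 z] fun _ => c) :
    wDzBar G z = 0 := by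
  simp [wDzBar, hG.fderiv_eq]

theorem hasFDerivAt_wDz (hG : DifferentiableAt ℝ (fderiv ℝ G) z) :
    HasFDerivAt (wDz G) ((2⁻¹ : ℂ) • ((fderiv ℝ (fderiv ℝ G) z).flip 1 -
      I • (fderiv ℝ (fderiv ℝ G) z).flip I)) z := by
  have h : ∀ u : ℂ, HasFDerivAt (fun w => fderiv ℝ G w u)
      ((fderiv ℝ (fderiv ℝ G) z).flip u) z := fun u => by
    simpa using hG.hasFDerivAt.clm_apply (hasFDerivAt_const u z)
  exact ((h 1).sub ((h I).const_smul I)).const_smul (2⁻¹ : ℂ)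

theorem hasFDerivAt_wDzBar (hG : DifferentiableAt ℝ (fderiv ℝ G) z) :
    HasFDerivAt (wDzBar G) ((2⁻¹ : ℂ) • ((fderiv ℝ (fderiv ℝ G) z).flip 1 +
      I • (fderiv ℝ (fderiv ℝ G) z).flip I)) z := by
  have h : ∀ u : ℂ, HasFDerivAt (fun w => fderiv ℝ G w u)
      ((fderiv ℝ (fderiv ℝ G) z).flip u) z := fun u => by
    simpa using hG.hasFDerivAt.clm_apply (hasFDerivAt_const u z)
  exact ((h 1).add ((h I).const_smul I)).const_smul (2⁻¹ : ℂ)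

theorem ContDiffAt.differentiableAt_fderiv (hG : ContDiffAt ℝ 2 G z) :
    DifferentiableAt ℝ (fderiv ℝ G) z :=
  (hG.fderiv_right (m := 1) (by norm_num)).differentiableAt one_ne_zero

theorem wDz_wDzBar_comm (hG : ContDiffAt ℝ 2 G z) :
    wDz (wDzBar G) z = wDzBar (wDz G) z := by
  have hsymm := hG.isSymmSndFDerivAt (by simp) 1 I
  rw [wDz, wDzBar, (hasFDerivAt_wDzBar hG.differentiableAt_fderiv).fderiv,
    (hasFDerivAt_wDz hG.differentiableAt_fderiv).fderiv]
  simp only [add_apply, sub_apply, smul_apply, ContinuousLinearMap.flip_apply, hsymm]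
  module

section Star

variable [StarAddMonoid E] [ContinuousStar E] [StarModule ℂ E] [StarModule ℝ E]

theorem wDzBar_star : wDzBar (fun w => star (G w)) z = star (wDz G z) := by
  simp [wDz, wDzBar, fderiv_star]

theorem wDzBar_eq_star_wDz (hG : ∀ w, star (G w) = G w) : wDzBar G z = star (wDz G z) := by
  simpa only [hG] using wDzBar_star (G := G) (z := z)

end Star

variable {ι : Type*} [Fintype ι] {F H : ℂ → ι → ℂ}

theorem fderiv_sum_mul_apply (hF : DifferentiableAt ℝ F z) (hH : DifferentiableAt ℝ H z)
    (v : ℂ) : fderiv ℝ (fun w => ∑ i, F w i * H w i) z v =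
      ∑ i, (fderiv ℝ F z v i * H z i + F z i * fderiv ℝ H z v i) := by
  have hF' := hasFDerivAt_pi'.1 hF.hasFDerivAt
  have hH' := hasFDerivAt_pi'.1 hH.hasFDerivAt
  rw [(HasFDerivAt.fun_sum fun i _ => (hF' i).fun_mul (hH' i)).fderiv]
  simp [add_comm, mul_comm]

theorem wDz_sum_mul (hF : DifferentiableAt ℝ F z) (hH : DifferentiableAt ℝ H z) :
    wDz (fun w => ∑ i, F w i * H w i) z = ∑ i, (wDz F z i * H z i + F z i * wDz H z i) := by
  simp only [wDz, fderiv_sum_mul_apply hF hH, smul_eq_mul, Finset.mul_sum,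
    ← Finset.sum_sub_distrib]
  refine Finset.sum_congr rfl fun i _ => ?_
  simp only [Pi.smul_apply, Pi.sub_apply, smul_eq_mul]
  ring

theorem wDzBar_sum_mul (hF : DifferentiableAt ℝ F z) (hH : DifferentiableAt ℝ H z) :
    wDzBar (fun w => ∑ i, F w i * H w i) z =
      ∑ i, (wDzBar F z i * H z i + F z i * wDzBar H z i) := by
  simp only [wDzBar, fderiv_sum_mul_apply hF hH, smul_eq_mul, Finset.mul_sum,
    ← Finset.sum_add_distrib]
  refine Finset.sum_congr rfl fun i _ => ?_
  simp only [Pi.smul_apply, Pi.add_apply, smul_eq_mul]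
  ring

theorem sum_wDz_mul_self_eq_zero {c : ℂ} (hF : DifferentiableAt ℝ F z)
    (hc : (fun w => ∑ i, F w i ^ 2) =ᶠ[𝓝 z] fun _ => c) : ∑ i, wDz F z i * F z i = 0 := by
  have h := (wDz_sum_mul hF hF).symm.trans
    (wDz_eq_zero_of_eventuallyEq_const (by simpa only [sq] using hc))
  simp only [Finset.sum_add_distrib, mul_comm (F z _)] at h
  linear_combination h / 2

theorem sum_wDzBar_mul_self_eq_zero {c : ℂ} (hF : DifferentiableAt ℝ F z)
    (hc : (fun w => ∑ i, F w i ^ 2) =ᶠ[𝓝 z] fun _ => c) : ∑ i, wDzBar F z i * F z i = 0 := by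
  have h := (wDzBar_sum_mul hF hF).symm.trans
    (wDzBar_eq_zero_of_eventuallyEq_const (by simpa only [sq] using hc))
  simp only [Finset.sum_add_distrib, mul_comm (F z _)] at h
  linear_combination h / 2

end Wirtinger

theorem contDiffOn_cpx {n : WithTop ℕ∞} {f : ℂ → EuclideanSpace ℝ (Fin 5)} {U : Set ℂ}
    (hf : ContDiffOn ℝ n f U) : ContDiffOn ℝ n (cpx f) U :=
  (ContinuousLinearMap.pi fun i => ofRealCLM.comp (EuclideanSpace.proj i) :
    EuclideanSpace ℝ (Fin 5) →L[ℝ] Fin 5 → ℂ).contDiff.comp_contDiffOn hf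

theorem star_cpx (f : ℂ → EuclideanSpace ℝ (Fin 5)) (z : ℂ) : star (cpx f z) = cpx f z :=
  funext fun _ => conj_ofReal _

/-- for a conformal map into the unit sphere S⁴, f_{z̄z} has no
tangential component and ⟨f_{z̄z}, f⟩ = −⟨f_z, f_{z̄}⟩. -/
theorem fzbarz_is_normal
    (U : Set ℂ) (hU : IsOpen U)
    (f : ℂ → EuclideanSpace ℝ (Fin 5))
    (hf : ContDiffOn ℝ 2 f U)
    (hsphere : ∀ z ∈ U, ∑ i : Fin 5, cpx f z i ^ 2 = 1)
    (hconf : ∀ z ∈ U, ∑ i : Fin 5, (wDz (cpx f) z i) ^ 2 = 0) :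
    ∀ z ∈ U,
      (∑ i : Fin 5, wDzBar (fun w => wDz (cpx f) w) z i * wDz (cpx f) z i = 0) ∧
      (∑ i : Fin 5, wDzBar (fun w => wDz (cpx f) w) z i
          * (starRingEnd ℂ) (wDz (cpx f) z i) = 0) ∧
      (∑ i : Fin 5, wDzBar (fun w => wDz (cpx f) w) z i * cpx f z i
        = -∑ i : Fin 5, wDz (cpx f) z i * (starRingEnd ℂ) (wDz (cpx f) z i)) := by
  intro z hz
  have hC : ∀ w ∈ U, ContDiffAt ℝ 2 (cpx f) w := fun w hw =>
    (contDiffOn_cpx hf).contDiffAt (hU.mem_nhds hw)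
  have hd : ∀ w ∈ U, DifferentiableAt ℝ (cpx f) w := fun w hw =>
    (hC w hw).differentiableAt two_ne_zero
  have hbar : ∀ w, wDzBar (cpx f) w = star (wDz (cpx f) w) := fun _ =>
    wDzBar_eq_star_wDz (star_cpx f)
  have horth : ∀ w ∈ U, ∑ i, wDz (cpx f) w i * cpx f w i = 0 := fun w hw =>
    sum_wDz_mul_self_eq_zero (hd w hw) (eventuallyEq_of_mem (hU.mem_nhds hw) hsphere)
  have hconf_bar : ∀ w ∈ U, ∑ i, wDzBar (cpx f) w i ^ 2 = 0 := fun w hw => by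
    simpa [hbar, ← map_pow, ← map_sum] using congrArg (starRingEnd ℂ) (hconf w hw)
  have hD : DifferentiableAt ℝ (wDz (cpx f)) z :=
    (hasFDerivAt_wDz (hC z hz).differentiableAt_fderiv).differentiableAt
  have hDbar : DifferentiableAt ℝ (wDzBar (cpx f)) z :=
    (hasFDerivAt_wDzBar (hC z hz).differentiableAt_fderiv).differentiableAt
  refine ⟨?_, ?_, ?_⟩
  · exact sum_wDzBar_mul_self_eq_zero hD (eventuallyEq_of_mem (hU.mem_nhds hz) hconf)
  · have h := sum_wDz_mul_self_eq_zero hDbar (eventuallyEq_of_mem (hU.mem_nhds hz) hconf_bar)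
    simpa [wDz_wDzBar_comm (hC z hz), hbar] using h
  · have h := (wDzBar_sum_mul hD (hd z hz)).symm.trans
      (wDzBar_eq_zero_of_eventuallyEq_const (eventuallyEq_of_mem (hU.mem_nhds hz) horth))
    simp only [Finset.sum_add_distrib, hbar, Pi.star_apply, Complex.star_def] at h
    linear_combination h
end
end
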